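/- Let G be a connected non-degenerate trigraph, let (A, B) be a square-connected homogeneous pair of strong cliques in G, and let G' be an optimal antithickening of G with thickening map I. Then there exist semiadjacent vertices a, b of G' such that A ⊆ I(a) and B ⊆ I(b). -/

import Mathlib

/-- A trigraph on a vertex type `V`: a symmetric adjacency function with values in
`{1, 0, -1}`, zero on the diagonal, such that semiedges form a matching. -/
structure Trigraph (V : Type) where
  θ : V → V → ℤ
  range_mem : ∀ u v, θ u v = 1 ∨ θ u v = 0 ∨ θ u v = -1
  symm : ∀ u v, θ u v = θ v u
  refl_zero : ∀ v, θ v v = 0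
  semi_matching : ∀ u v w : V, u ≠ v → u ≠ w → v ≠ w → θ u v = 0 → θ u w ≠ 0

namespace Trigraph

variable {V V' V'' : Type}

/-- `u` and `v` are strongly adjacent. -/
def StrongAdj (G : Trigraph V) (u v : V) : Prop := G.θ u v = 1

/-- Distinct `u` and `v` are semiadjacent. -/
def SemiAdj (G : Trigraph V) (u v : V) : Prop := u ≠ v ∧ G.θ u v = 0

/-- Distinct `u` and `v` are adjacent. -/
def Adj (G : Trigraph V) (u v : V) : Prop := u ≠ v ∧ (G.θ u v = 1 ∨ G.θ u v = 0)

/-- Distinct `u` and `v` are antiadjacent. -/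
def AntiAdj (G : Trigraph V) (u v : V) : Prop := u ≠ v ∧ (G.θ u v = 0 ∨ G.θ u v = -1)

/-- `u` and `v` are strongly antiadjacent. -/
def StrongAntiAdj (G : Trigraph V) (u v : V) : Prop := G.θ u v = -1

/-- `X` is strongly complete to `Y`. -/
def StronglyComplete (G : Trigraph V) (X Y : Set V) : Prop :=
  ∀ u ∈ X, ∀ v ∈ Y, G.StrongAdj u v

/-- `X` is strongly anticomplete to `Y`. -/
def StronglyAnticomplete (G : Trigraph V) (X Y : Set V) : Prop :=
  ∀ u ∈ X, ∀ v ∈ Y, G.StrongAntiAdj u v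

/-- A strong clique: pairwise strongly adjacent vertices. -/
def IsStrongClique (G : Trigraph V) (K : Set V) : Prop := K.Pairwise G.StrongAdj

/-- A stable set: pairwise antiadjacent vertices. -/
def IsStableSet (G : Trigraph V) (S : Set V) : Prop := S.Pairwise G.AntiAdj

/-- The neighbourhood of a vertex: the set of vertices adjacent to it. -/
def neighborhood (G : Trigraph V) (v : V) : Set V := {u | G.Adj v u}

/-- Claw-free: no vertex has three pairwise antiadjacent vertices in its neighbourhood. -/
def ClawFree (G : Trigraph V) : Prop :=
  ¬ ∃ v a b c : V, G.Adj v a ∧ G.Adj v b ∧ G.Adj v c ∧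
    G.AntiAdj a b ∧ G.AntiAdj a c ∧ G.AntiAdj b c

/-- Cobipartite: the vertex set is the union of two strong cliques. -/
def Cobipartite (G : Trigraph V) : Prop :=
  ∃ K1 K2 : Set V, G.IsStrongClique K1 ∧ G.IsStrongClique K2 ∧ K1 ∪ K2 = Set.univ

/-- Quasi-line: the neighbourhood of every vertex is the union of two strong cliques. -/
def QuasiLine (G : Trigraph V) : Prop :=
  ∀ v : V, ∃ K1 K2 : Set V, G.IsStrongClique K1 ∧ G.IsStrongClique K2 ∧
    G.neighborhood v = K1 ∪ K2

/-- Connected: any two vertices are joined by a sequence of consecutively adjacent vertices. -/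
def Connected (G : Trigraph V) : Prop :=
  ∀ u v : V, Relation.ReflTransGen G.Adj u v

/-- Non-degenerate: quasi-line and not cobipartite, or claw-free with stability number ≥ 3. -/
def NonDegenerate (G : Trigraph V) : Prop :=
  (G.QuasiLine ∧ ¬ G.Cobipartite) ∨
  (G.ClawFree ∧ ∃ S : Set V, G.IsStableSet S ∧ 3 ≤ S.ncard)

/-- A homogeneous set: `|V| > |X| ≥ 2` and every vertex outside `X` is strongly complete
or strongly anticomplete to `X`. -/
def HomogeneousSet (G : Trigraph V) (X : Set V) : Prop :=
  2 ≤ X.ncard ∧ X ≠ Set.univ ∧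
  ∀ v ∉ X, G.StronglyComplete {v} X ∨ G.StronglyAnticomplete {v} X

/-- `v1 v2 v3 v4` is a square: the pairs `v1v3`, `v2v4` are antiadjacent and the other
four pairs are adjacent. -/
def IsSquare (G : Trigraph V) (v1 v2 v3 v4 : V) : Prop :=
  G.AntiAdj v1 v3 ∧ G.AntiAdj v2 v4 ∧
  G.Adj v1 v2 ∧ G.Adj v2 v3 ∧ G.Adj v3 v4 ∧ G.Adj v4 v1

/-- `X` contains a square. -/
def HasSquareIn (G : Trigraph V) (X : Set V) : Prop :=
  ∃ v1 v2 v3 v4 : V, G.IsSquare v1 v2 v3 v4 ∧ ({v1, v2, v3, v4} : Set V) ⊆ X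

/-- Homogeneous pair of strong cliques `(A, B)`. -/
def HPOSC (G : Trigraph V) (A B : Set V) : Prop :=
  A.Nonempty ∧ B.Nonempty ∧ Disjoint A B ∧
  G.IsStrongClique A ∧ G.IsStrongClique B ∧
  ¬ (∃ a b : V, A = {a} ∧ B = {b}) ∧
  ∀ v ∉ A ∪ B,
    (G.StronglyComplete {v} A ∨ G.StronglyAnticomplete {v} A) ∧
    (G.StronglyComplete {v} B ∨ G.StronglyAnticomplete {v} B)

/-- Deletion-minimal homogeneous pair of strong cliques. -/
def DeletionMinimal (G : Trigraph V) (A B : Set V) : Prop :=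
  G.HPOSC A B ∧ G.HasSquareIn (A ∪ B) ∧
  (∀ a ∈ A, ¬ G.StronglyComplete {a} B ∧ ¬ G.StronglyAnticomplete {a} B) ∧
  (∀ b ∈ B, ¬ G.StronglyComplete {b} A ∧ ¬ G.StronglyAnticomplete {b} A)

/-- There is a square contained in `X` intersecting both `S1` and `S2`. -/
def SquareMeets (G : Trigraph V) (X S1 S2 : Set V) : Prop :=
  ∃ v1 v2 v3 v4 : V, G.IsSquare v1 v2 v3 v4 ∧ ({v1, v2, v3, v4} : Set V) ⊆ X ∧
    (({v1, v2, v3, v4} : Set V) ∩ S1).Nonempty ∧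
    (({v1, v2, v3, v4} : Set V) ∩ S2).Nonempty

/-- Square-connected homogeneous pair of strong cliques. -/
def SquareConnected (G : Trigraph V) (A B : Set V) : Prop :=
  G.HPOSC A B ∧
  (∀ A' A'' : Set V, A'.Nonempty → A''.Nonempty → A' ∪ A'' = A → Disjoint A' A'' →
    G.SquareMeets (A ∪ B) A' A'') ∧
  (∀ B' B'' : Set V, B'.Nonempty → B''.Nonempty → B' ∪ B'' = B → Disjoint B' B'' →
    G.SquareMeets (A ∪ B) B' B'')

/-- Inclusion-maximal square-connected homogeneous pair of strong cliques. -/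
def MaxSquareConnected (G : Trigraph V) (A B : Set V) : Prop :=
  G.SquareConnected A B ∧
  ∀ A' B' : Set V, G.SquareConnected A' B' → A ⊆ A' → B ⊆ B' → A' = A ∧ B' = B

/-- Two homogeneous pairs have skew intersection if a part of one intersects both
parts of the other. -/
def SkewIntersection (A1 B1 A2 B2 : Set V) : Prop :=
  ((A1 ∩ A2).Nonempty ∧ (A1 ∩ B2).Nonempty) ∨
  ((B1 ∩ A2).Nonempty ∧ (B1 ∩ B2).Nonempty) ∨
  ((A2 ∩ A1).Nonempty ∧ (A2 ∩ B1).Nonempty) ∨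
  ((B2 ∩ A1).Nonempty ∧ (B2 ∩ B1).Nonempty)

/-- Laminar: contains no square-connected homogeneous pair of strong cliques. -/
def Laminar (G : Trigraph V) : Prop := ¬ ∃ A B : Set V, G.SquareConnected A B

/-- `G` is a thickening of `G'` via the map `I` (equivalently, `G'` is an antithickening
of `G`): the `I v` are nonempty strong cliques partitioning `V(G)` respecting adjacency. -/
def IsThickening (G : Trigraph V) (G' : Trigraph V') (I : V' → Set V) : Prop :=
  (∀ v : V', (I v).Nonempty ∧ G.IsStrongClique (I v)) ∧
  (∀ u v : V', u ≠ v → Disjoint (I u) (I v)) ∧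
  (⋃ v : V', I v) = Set.univ ∧
  ∀ u v : V', u ≠ v →
    (G'.StrongAdj u v → G.StronglyComplete (I u) (I v)) ∧
    (G'.StrongAntiAdj u v → G.StronglyAnticomplete (I u) (I v)) ∧
    (G'.SemiAdj u v →
      ¬ G.StronglyComplete (I u) (I v) ∧ ¬ G.StronglyAnticomplete (I u) (I v))

/-- `G'` (with thickening map `I`) is an optimal antithickening of `G`: it is a laminar
antithickening with the maximum possible number of vertices. -/
def OptimalAntithickening (G : Trigraph V) (G' : Trigraph V') (I : V' → Set V) : Prop :=
  G.IsThickening G' I ∧ G'.Laminar ∧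
  ∀ (W : Type) (H : Trigraph W) (J : W → Set V),
    G.IsThickening H J → H.Laminar → Nat.card W ≤ Nat.card V'

/-- Isomorphism of trigraphs. -/
def Isomorphic (G1 : Trigraph V) (G2 : Trigraph V') : Prop :=
  ∃ f : V ≃ V', ∀ u v : V, G2.θ (f u) (f v) = G1.θ u v

end Trigraph

/-
Let `Â = verticesMeeting I A` and `B̂ = verticesMeeting I B` be the vertices of `G'` whose bags
`I p` meet `A`, resp. `B`. Since `G` is
connected, claw-free and non-degenerate, some vertex of `G` is strongly complete to one of
`A`, `B` and strongly anticomplete to the other; as semiedges form a matching, this keeps `Â`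
and `B̂` disjoint. Every vertex of `A` has an antiadjacent and an adjacent vertex in `B`, and
with claw-freeness and the matching property again one checks that `(Â, B̂)` is a homogeneous
pair of strong cliques of `G'` whose squares are the images of squares in `A ∪ B`. So it is
square-connected unless `Â = {a}` and `B̂ = {b}`; laminarity of `G'` leaves only that case, and
then `a`, `b` are semiadjacent.
-/

namespace Trigraph

variable {V V' : Type} {G : Trigraph V} {A B K L X : Set V} {u v w x y v₁ v₂ v₃ v₄ : V}

theorem θ_le_one (G : Trigraph V) (u v : V) : G.θ u v ≤ 1 := by
  rcases G.range_mem u v with h | h | h <;> omega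

theorem neg_one_le_θ (G : Trigraph V) (u v : V) : -1 ≤ G.θ u v := by
  rcases G.range_mem u v with h | h | h <;> omega

theorem Adj.symm (h : G.Adj u v) : G.Adj v u := ⟨h.1.symm, by rw [G.symm]; exact h.2⟩

theorem AntiAdj.symm (h : G.AntiAdj u v) : G.AntiAdj v u := ⟨h.1.symm, by rw [G.symm]; exact h.2⟩

theorem Adj.θ_nonneg (h : G.Adj u v) : 0 ≤ G.θ u v := by
  rcases h.2 with h | h <;> omega

theorem AntiAdj.θ_nonpos (h : G.AntiAdj u v) : G.θ u v ≤ 0 := by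
  rcases h.2 with h | h <;> omega

theorem adj_of_θ_nonneg (huv : u ≠ v) (h : 0 ≤ G.θ u v) : G.Adj u v :=
  ⟨huv, by have := G.θ_le_one u v; omega⟩

theorem antiAdj_of_θ_nonpos (huv : u ≠ v) (h : G.θ u v ≤ 0) : G.AntiAdj u v :=
  ⟨huv, by have := G.neg_one_le_θ u v; omega⟩

theorem ne_of_θ_ne_zero (h : G.θ u v ≠ 0) : u ≠ v := by
  rintro rfl
  exact h (G.refl_zero u)

theorem adj_of_θ_eq_one (h : G.θ u v = 1) : G.Adj u v :=
  ⟨ne_of_θ_ne_zero (G := G) (by omega), Or.inl h⟩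

theorem antiAdj_of_θ_eq_neg_one (h : G.θ u v = -1) : G.AntiAdj u v :=
  ⟨ne_of_θ_ne_zero (G := G) (by omega), Or.inr h⟩

theorem eq_of_θ_eq_zero (huv : u ≠ v) (huw : u ≠ w) (hv : G.θ u v = 0) (hw : G.θ u w = 0) :
    v = w :=
  by_contra fun hvw => G.semi_matching u v w huv huw hvw hv hw

theorem IsStrongClique.θ_nonneg (hK : G.IsStrongClique K) (hx : x ∈ K) (hy : y ∈ K) :
    0 ≤ G.θ x y := by
  rcases eq_or_ne x y with rfl | hxy
  · rw [G.refl_zero]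
  · rw [show G.θ x y = 1 from hK hx hy hxy]
    norm_num

theorem IsStrongClique.not_antiAdj (hK : G.IsStrongClique K) (hx : x ∈ K) (hy : y ∈ K) :
    ¬ G.AntiAdj x y := fun h => by
  have : G.θ x y = 1 := hK hx hy h.1
  have := h.θ_nonpos
  omega

theorem not_antiAdj_triple_of_mem_union (hK : G.IsStrongClique K) (hL : G.IsStrongClique L)
    (hu : u ∈ K ∪ L) (hv : v ∈ K ∪ L) (hw : w ∈ K ∪ L) :
    ¬ (G.AntiAdj u v ∧ G.AntiAdj u w ∧ G.AntiAdj v w) := by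
  rintro ⟨huv, huw, hvw⟩
  rcases hu with hu | hu <;> rcases hv with hv | hv <;> rcases hw with hw | hw <;>
    first
      | exact hK.not_antiAdj hu hv huv | exact hK.not_antiAdj hu hw huw
      | exact hK.not_antiAdj hv hw hvw | exact hL.not_antiAdj hu hv huv
      | exact hL.not_antiAdj hu hw huw | exact hL.not_antiAdj hv hw hvw

theorem QuasiLine.clawFree (h : G.QuasiLine) : G.ClawFree := by
  rintro ⟨v, a, b, c, hva, hvb, hvc, hab, hac, hbc⟩
  obtain ⟨K₁, K₂, hK₁, hK₂, hN⟩ := h v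
  have mem : ∀ {z}, G.Adj v z → z ∈ K₁ ∪ K₂ := fun hz => hN ▸ hz
  exact not_antiAdj_triple_of_mem_union hK₁ hK₂ (mem hva) (mem hvb) (mem hvc) ⟨hab, hac, hbc⟩

theorem NonDegenerate.clawFree (h : G.NonDegenerate) : G.ClawFree :=
  h.elim (fun h => h.1.clawFree) (fun h => h.1)

theorem IsSquare.rotate (h : G.IsSquare v₁ v₂ v₃ v₄) : G.IsSquare v₂ v₃ v₄ v₁ := by
  obtain ⟨h₁₃, h₂₄, h₁₂, h₂₃, h₃₄, h₄₁⟩ := h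
  exact ⟨h₂₄, h₁₃.symm, h₂₃, h₃₄, h₄₁, h₁₂⟩

theorem IsSquare.swap (h : G.IsSquare v₁ v₂ v₃ v₄) : G.IsSquare v₂ v₁ v₄ v₃ := by
  obtain ⟨h₁₃, h₂₄, h₁₂, h₂₃, h₃₄, h₄₁⟩ := h
  exact ⟨h₂₄, h₁₃, h₁₂.symm, h₄₁.symm, h₃₄.symm, h₂₃.symm⟩

/-- Each antiadjacent pair of the square has one vertex in each clique. -/
theorem IsSquare.exists_of_subset_union (hA : G.IsStrongClique A) (hB : G.IsStrongClique B)
    (h : G.IsSquare v₁ v₂ v₃ v₄) (hsub : ({v₁, v₂, v₃, v₄} : Set V) ⊆ A ∪ B) :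
    ∃ a₁ ∈ A, ∃ a₂ ∈ A, ∃ b₁ ∈ B, ∃ b₂ ∈ B, G.IsSquare a₁ a₂ b₁ b₂ ∧
      ({v₁, v₂, v₃, v₄} : Set V) = {a₁, a₂, b₁, b₂} := by
  have across : ∀ {x y}, G.AntiAdj x y → x ∈ A ∪ B → y ∈ A ∪ B →
      x ∈ A ∧ y ∈ B ∨ x ∈ B ∧ y ∈ A := by
    rintro x y hxy (hx | hx) (hy | hy)
    exacts [(hA.not_antiAdj hx hy hxy).elim, Or.inl ⟨hx, hy⟩, Or.inr ⟨hx, hy⟩,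
      (hB.not_antiAdj hx hy hxy).elim]
  have mem : ∀ {z}, z ∈ ({v₁, v₂, v₃, v₄} : Set V) → z ∈ A ∪ B := fun hz => hsub hz
  rcases across h.1 (mem (by simp)) (mem (by simp)) with ⟨h₁, h₃⟩ | ⟨h₁, h₃⟩ <;>
    rcases across h.2.1 (mem (by simp)) (mem (by simp)) with ⟨h₂, h₄⟩ | ⟨h₂, h₄⟩
  · exact ⟨v₁, h₁, v₂, h₂, v₃, h₃, v₄, h₄, h, rfl⟩
  · refine ⟨v₄, h₄, v₁, h₁, v₂, h₂, v₃, h₃, h.rotate.rotate.rotate, ?_⟩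
    ext; simp only [Set.mem_insert_iff, Set.mem_singleton_iff]; tauto
  · refine ⟨v₂, h₂, v₃, h₃, v₄, h₄, v₁, h₁, h.rotate, ?_⟩
    ext; simp only [Set.mem_insert_iff, Set.mem_singleton_iff]; tauto
  · refine ⟨v₃, h₃, v₄, h₄, v₁, h₁, v₂, h₂, h.rotate.rotate, ?_⟩
    ext; simp only [Set.mem_insert_iff, Set.mem_singleton_iff]; tauto

theorem HPOSC.nonempty_left (h : G.HPOSC A B) : A.Nonempty := h.1

theorem HPOSC.nonempty_right (h : G.HPOSC A B) : B.Nonempty := h.2.1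

theorem HPOSC.disjoint (h : G.HPOSC A B) : Disjoint A B := h.2.2.1

theorem HPOSC.isStrongClique_left (h : G.HPOSC A B) : G.IsStrongClique A := h.2.2.2.1

theorem HPOSC.isStrongClique_right (h : G.HPOSC A B) : G.IsStrongClique B := h.2.2.2.2.1

theorem HPOSC.symm (h : G.HPOSC A B) : G.HPOSC B A := by
  obtain ⟨hA, hB, hd, hcA, hcB, hns, hhom⟩ := h
  refine ⟨hB, hA, hd.symm, hcB, hcA, fun ⟨b, a, hb, ha⟩ => hns ⟨a, b, ha, hb⟩, fun v hv => ?_⟩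
  exact (hhom v (by rwa [Set.union_comm])).symm

theorem HPOSC.θ_left (h : G.HPOSC A B) (hv : v ∉ A ∪ B) :
    (∀ x ∈ A, G.θ v x = 1) ∨ ∀ x ∈ A, G.θ v x = -1 :=
  (h.2.2.2.2.2.2 v hv).1.imp (fun hc x hx => hc v rfl x hx) (fun ha x hx => ha v rfl x hx)

theorem HPOSC.θ_right (h : G.HPOSC A B) (hv : v ∉ A ∪ B) :
    (∀ y ∈ B, G.θ v y = 1) ∨ ∀ y ∈ B, G.θ v y = -1 :=
  h.symm.θ_left (by rwa [Set.union_comm])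

theorem HPOSC.θ_eq_left (h : G.HPOSC A B) (hv : v ∉ A ∪ B) (hx : x ∈ A) (hy : y ∈ A) :
    G.θ v x = G.θ v y := by
  rcases h.θ_left hv with hA | hA <;> rw [hA x hx, hA y hy]

theorem HPOSC.θ_eq_right (h : G.HPOSC A B) (hv : v ∉ A ∪ B) (hx : x ∈ B) (hy : y ∈ B) :
    G.θ v x = G.θ v y :=
  h.symm.θ_eq_left (by rwa [Set.union_comm]) hx hy

theorem SquareConnected.symm (h : G.SquareConnected A B) : G.SquareConnected B A := by
  obtain ⟨h₀, hA, hB⟩ := h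
  refine ⟨h₀.symm, fun B₁ B₂ h₁ h₂ hun hd => ?_, fun A₁ A₂ h₁ h₂ hun hd => ?_⟩
  · rw [Set.union_comm]; exact hB B₁ B₂ h₁ h₂ hun hd
  · rw [Set.union_comm]; exact hA A₁ A₂ h₁ h₂ hun hd

theorem SquareConnected.exists_isSquare_of_partition (h : G.SquareConnected A B)
    {A₁ A₂ : Set V} (h₁ : A₁.Nonempty) (h₂ : A₂.Nonempty) (hun : A₁ ∪ A₂ = A)
    (hd : Disjoint A₁ A₂) :
    ∃ a₁ ∈ A₁, ∃ a₂ ∈ A₂, ∃ b₁ ∈ B, ∃ b₂ ∈ B, G.IsSquare a₁ a₂ b₁ b₂ := by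
  obtain ⟨v₁, v₂, v₃, v₄, hsq, hsub, ⟨z₁, hz₁, hz₁A⟩, ⟨z₂, hz₂, hz₂A⟩⟩ :=
    h.2.1 A₁ A₂ h₁ h₂ hun hd
  obtain ⟨a₁, -, a₂, -, b₁, hb₁, b₂, hb₂, hsq', hset⟩ :=
    hsq.exists_of_subset_union h.1.isStrongClique_left h.1.isStrongClique_right hsub
  have side : ∀ {z}, z ∈ ({v₁, v₂, v₃, v₄} : Set V) → z ∈ A → z = a₁ ∨ z = a₂ := by
    intro z hz hzA
    rw [hset] at hz
    rcases hz with hz | hz | rfl | rfl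
    exacts [Or.inl hz, Or.inr hz, (h.1.disjoint.ne_of_mem hzA hb₁ rfl).elim,
      (h.1.disjoint.ne_of_mem hzA hb₂ rfl).elim]
  have hz₁₂ : z₁ ≠ z₂ := hd.ne_of_mem hz₁A hz₂A
  rcases side hz₁ (hun ▸ Or.inl hz₁A) with rfl | rfl <;>
    rcases side hz₂ (hun ▸ Or.inr hz₂A) with rfl | rfl
  · exact (hz₁₂ rfl).elim
  · exact ⟨_, hz₁A, _, hz₂A, b₁, hb₁, b₂, hb₂, hsq'⟩
  · exact ⟨_, hz₁A, _, hz₂A, b₂, hb₂, b₁, hb₁, hsq'.swap⟩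
  · exact (hz₁₂ rfl).elim

theorem SquareConnected.exists_isSquare_of_ne (h : G.SquareConnected A B) (hx : x ∈ A)
    (hy : y ∈ A) (hyx : y ≠ x) : ∃ a ∈ A, ∃ b₁ ∈ B, ∃ b₂ ∈ B, G.IsSquare x a b₁ b₂ := by
  obtain ⟨_, rfl, a, ha, b₁, hb₁, b₂, hb₂, hsq⟩ :=
    h.exists_isSquare_of_partition (A₂ := A \ {x}) (Set.singleton_nonempty x) ⟨y, hy, hyx⟩
      (Set.union_sdiff_cancel (Set.singleton_subset_iff.2 hx)) Set.disjoint_sdiff_right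
  exact ⟨a, ha.1, b₁, hb₁, b₂, hb₂, hsq⟩

theorem SquareConnected.exists_ne (h : G.SquareConnected A B) (hx : x ∈ A) :
    ∃ y ∈ A, y ≠ x := by
  by_contra! hA
  obtain ⟨-, ⟨b, hb⟩, -, -, -, hns, -⟩ := h.1
  obtain ⟨b', hb', hb'b⟩ : ∃ b' ∈ B, b' ≠ b := by
    by_contra! hB
    exact hns ⟨x, b, Set.eq_singleton_iff_unique_mem.2 ⟨hx, hA⟩,
      Set.eq_singleton_iff_unique_mem.2 ⟨hb, hB⟩⟩
  obtain ⟨_, -, a₁, ha₁, a₂, ha₂, hsq⟩ := h.symm.exists_isSquare_of_ne hb hb' hb'b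
  exact hsq.2.2.2.2.1.1 ((hA a₁ ha₁).trans (hA a₂ ha₂).symm)

theorem SquareConnected.exists_isSquare_of_mem (h : G.SquareConnected A B) (hx : x ∈ A) :
    ∃ a ∈ A, ∃ b₁ ∈ B, ∃ b₂ ∈ B, G.IsSquare x a b₁ b₂ := by
  obtain ⟨_, hy, hyx⟩ := h.exists_ne hx
  exact h.exists_isSquare_of_ne hx hy hyx

theorem SquareConnected.exists_θ_nonpos (h : G.SquareConnected A B) (hx : x ∈ A) :
    ∃ y ∈ B, G.θ x y ≤ 0 := by
  obtain ⟨_, _, b, hb, _, _, hsq⟩ := h.exists_isSquare_of_mem hx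
  exact ⟨b, hb, hsq.1.θ_nonpos⟩

theorem SquareConnected.exists_θ_nonneg (h : G.SquareConnected A B) (hx : x ∈ A) :
    ∃ y ∈ B, 0 ≤ G.θ x y := by
  obtain ⟨_, _, _, _, b, hb, hsq⟩ := h.exists_isSquare_of_mem hx
  exact ⟨b, hb, hsq.2.2.2.2.2.symm.θ_nonneg⟩

def Separates (G : Trigraph V) (v : V) (A B : Set V) : Prop :=
  (∀ x ∈ A, G.θ v x = 1) ∧ ∀ y ∈ B, G.θ v y = -1

/-- The strongly anticomplete outside vertices are closed under adjacency, so by connectivity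
there are none. -/
theorem Connected.forall_θ_eq_one_of_uniform (hconn : G.Connected) (hX : X.Nonempty)
    (huni : ∀ v ∉ X, (∀ z ∈ X, G.θ v z = 1) ∨ ∀ z ∈ X, G.θ v z = -1)
    (hsep : ∀ n ∉ X, ∀ m ∉ X, (∀ z ∈ X, G.θ n z = 1) → (∀ z ∈ X, G.θ m z = -1) →
      ¬ G.Adj m n) :
    ∀ v ∉ X, ∀ z ∈ X, G.θ v z = 1 := by
  intro v hv
  refine (huni v hv).resolve_right fun hanti => ?_
  obtain ⟨x, hx⟩ := hX
  have closed : ∀ w, Relation.ReflTransGen G.Adj v w → w ∉ X ∧ ∀ z ∈ X, G.θ w z = -1 := by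
    intro w hw
    induction hw with
    | refl => exact ⟨hv, hanti⟩
    | @tail b c _ hbc ih =>
      have hc : c ∉ X := fun hc => by
        have := ih.2 c hc
        have := hbc.θ_nonneg
        omega
      exact ⟨hc, (huni c hc).resolve_left fun hcomp => hsep c hc b ih.1 hcomp ih.2 hbc⟩
  exact (closed x (hconn v x)).1 hx

theorem QuasiLine.cobipartite_of_forall_θ_eq_one (hql : G.QuasiLine)
    (hA : G.IsStrongClique A) (hB : G.IsStrongClique B) (hx : x ∈ A)
    (hout : ∀ v ∉ A ∪ B, ∀ z ∈ A ∪ B, G.θ v z = 1) : G.Cobipartite := by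
  obtain ⟨K₁, K₂, hK₁, hK₂, hN⟩ := hql x
  have hK₂' : ∀ v ∉ A ∪ B, v ∉ K₁ → v ∈ K₂ := by
    intro v hv hvK₁
    have : v ∈ G.neighborhood x := adj_of_θ_eq_one (by rw [G.symm]; exact hout v hv x (Or.inl hx))
    rw [hN] at this
    exact this.resolve_left hvK₁
  refine ⟨A ∪ {v | v ∉ A ∪ B ∧ v ∈ K₁}, B ∪ {v | v ∉ A ∪ B ∧ v ∉ K₁}, ?_, ?_, ?_⟩
  · rintro u (hu | hu) w (hw | hw) huw
    exacts [hA hu hw huw, (G.symm u w).trans (hout w hw.1 u (Or.inl hu)),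
      hout u hu.1 w (Or.inl hw), hK₁ hu.2 hw.2 huw]
  · rintro u (hu | hu) w (hw | hw) huw
    exacts [hB hu hw huw, (G.symm u w).trans (hout w hw.1 u (Or.inr hu)),
      hout u hu.1 w (Or.inr hw), hK₂ (hK₂' u hu.1 hu.2) (hK₂' w hw.1 hw.2) huw]
  · ext v
    simp only [Set.mem_union, Set.mem_ofPred_eq, Set.mem_univ, iff_true]
    tauto

theorem ClawFree.ncard_le_two_of_forall_θ_eq_one (hcf : G.ClawFree)
    (hA : G.IsStrongClique A) (hB : G.IsStrongClique B) (hx : x ∈ A)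
    (hout : ∀ v ∉ A ∪ B, ∀ z ∈ A ∪ B, G.θ v z = 1) {S : Set V} (hS : G.IsStableSet S) :
    S.ncard ≤ 2 := by
  by_contra! h3
  obtain ⟨a, b, c, ha, hb, hc, hab, hac, hbc⟩ :=
    (Set.two_lt_ncard_iff (Set.finite_of_ncard_pos (by omega))).1 h3
  have hab := hS ha hb hab
  have hac := hS ha hc hac
  have hbc := hS hb hc hbc
  have inside : ∀ {u w}, G.AntiAdj u w → u ∉ A ∪ B → w ∉ A ∪ B := by
    intro u w huw hu hw
    have := hout u hu w hw
    have := huw.θ_nonpos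
    omega
  by_cases haAB : a ∈ A ∪ B
  · have hbAB : b ∈ A ∪ B := by_contra fun hb => inside hab.symm hb haAB
    have hcAB : c ∈ A ∪ B := by_contra fun hc => inside hac.symm hc haAB
    exact not_antiAdj_triple_of_mem_union hA hB haAB hbAB hcAB ⟨hab, hac, hbc⟩
  · have adj : ∀ {u}, u ∉ A ∪ B → G.Adj x u := fun hu =>
      adj_of_θ_eq_one (by rw [G.symm]; exact hout _ hu x (Or.inl hx))
    exact hcf ⟨x, a, b, c, adj haAB, adj (inside hab haAB), adj (inside hac haAB), hab, hac, hbc⟩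

theorem not_nonDegenerate_of_forall_θ_eq_one (hA : G.IsStrongClique A)
    (hB : G.IsStrongClique B) (hx : x ∈ A) (hout : ∀ v ∉ A ∪ B, ∀ z ∈ A ∪ B, G.θ v z = 1) :
    ¬ G.NonDegenerate := by
  rintro (⟨hql, hncb⟩ | ⟨hcf, S, hS, h3⟩)
  · exact hncb (hql.cobipartite_of_forall_θ_eq_one hA hB hx hout)
  · have := hcf.ncard_le_two_of_forall_θ_eq_one hA hB hx hout hS
    omega

/-- Otherwise every vertex outside `A ∪ B` is uniform on `A ∪ B`; a strongly complete one
adjacent to a strongly anticomplete one would be the centre of a claw. -/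
theorem SquareConnected.exists_separates (hconn : G.Connected) (hnd : G.NonDegenerate)
    (h : G.SquareConnected A B) : ∃ v, G.Separates v A B ∨ G.Separates v B A := by
  by_contra! hU
  have hcf := hnd.clawFree
  obtain ⟨x, hx⟩ := h.1.nonempty_left
  obtain ⟨y, hy, hxy⟩ := h.exists_θ_nonpos hx
  have huni : ∀ v ∉ A ∪ B, (∀ z ∈ A ∪ B, G.θ v z = 1) ∨ ∀ z ∈ A ∪ B, G.θ v z = -1 := by
    intro v hv
    rcases h.1.θ_left hv with hA | hA <;> rcases h.1.θ_right hv with hB | hB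
    · exact Or.inl fun z hz => hz.elim (hA z) (hB z)
    · exact ((hU v).1 ⟨hA, hB⟩).elim
    · exact ((hU v).2 ⟨hB, hA⟩).elim
    · exact Or.inr fun z hz => hz.elim (hA z) (hB z)
  have hsep : ∀ n ∉ A ∪ B, ∀ m ∉ A ∪ B, (∀ z ∈ A ∪ B, G.θ n z = 1) →
      (∀ z ∈ A ∪ B, G.θ m z = -1) → ¬ G.Adj m n := by
    intro n _ m _ hn hm hmn
    refine hcf ⟨n, x, y, m, adj_of_θ_eq_one (hn x (Or.inl hx)),
      adj_of_θ_eq_one (hn y (Or.inr hy)), hmn.symm,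
      antiAdj_of_θ_nonpos (h.1.disjoint.ne_of_mem hx hy) hxy, ?_, ?_⟩ <;>
    exact antiAdj_of_θ_eq_neg_one (by rw [G.symm]; exact hm _ (by simp [hx, hy]))
  exact not_nonDegenerate_of_forall_θ_eq_one h.1.isStrongClique_left h.1.isStrongClique_right hx
    (hconn.forall_θ_eq_one_of_uniform ⟨x, Or.inl hx⟩ huni hsep) hnd

def verticesMeeting (I : V' → Set V) (X : Set V) : Set V' := {p | (I p ∩ X).Nonempty}

namespace IsThickening

variable {G' : Trigraph V'} {I : V' → Set V} {p q w' : V'} {x' y' : V}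

theorem exists_mem (hI : G.IsThickening G' I) (x : V) : ∃ p, x ∈ I p :=
  Set.mem_iUnion.1 (hI.2.2.1 ▸ Set.mem_univ x)

theorem eq_of_mem_of_mem (hI : G.IsThickening G' I) (hp : x ∈ I p) (hq : x ∈ I q) : p = q :=
  by_contra fun hpq => Set.disjoint_left.1 (hI.2.1 p q hpq) hp hq

theorem θ_nonneg_of_mem (hI : G.IsThickening G' I) (hx : x ∈ I p) (hy : y ∈ I p) :
    0 ≤ G.θ x y :=
  (hI.1 p).2.θ_nonneg hx hy

theorem θ_eq_one_of_mem (hI : G.IsThickening G' I) (hx : x ∈ I p) (hy : y ∈ I p)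
    (hxy : x ≠ y) : G.θ x y = 1 :=
  (hI.1 p).2 hx hy hxy

theorem θ_eq_one (hI : G.IsThickening G' I) (hpq : p ≠ q) (hx : x ∈ I p) (hy : y ∈ I q)
    (h : G'.θ p q = 1) : G.θ x y = 1 :=
  (hI.2.2.2 p q hpq).1 h x hx y hy

theorem θ_eq_neg_one (hI : G.IsThickening G' I) (hpq : p ≠ q) (hx : x ∈ I p) (hy : y ∈ I q)
    (h : G'.θ p q = -1) : G.θ x y = -1 :=
  (hI.2.2.2 p q hpq).2.1 h x hx y hy

theorem θ_nonpos (hI : G.IsThickening G' I) (hpq : p ≠ q) (hx : x ∈ I p) (hy : y ∈ I q)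
    (h : G.θ x y ≤ 0) : G'.θ p q ≤ 0 := by
  have := G'.θ_le_one p q
  by_contra h'
  have := hI.θ_eq_one hpq hx hy (by omega)
  omega

theorem θ_nonneg (hI : G.IsThickening G' I) (hpq : p ≠ q) (hx : x ∈ I p) (hy : y ∈ I q)
    (h : 0 ≤ G.θ x y) : 0 ≤ G'.θ p q := by
  have := G'.neg_one_le_θ p q
  by_contra h'
  have := hI.θ_eq_neg_one hpq hx hy (by omega)
  omega

theorem θ_eq_zero (hI : G.IsThickening G' I) (hpq : p ≠ q) (hx : x ∈ I p) (hx' : x' ∈ I p)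
    (hy : y ∈ I q) (hy' : y' ∈ I q) (h : G.θ x y ≤ 0) (h' : 0 ≤ G.θ x' y') :
    G'.θ p q = 0 :=
  le_antisymm (hI.θ_nonpos hpq hx hy h) (hI.θ_nonneg hpq hx' hy' h')

theorem exists_θ_nonpos (hI : G.IsThickening G' I) (hpq : p ≠ q) (h : G'.θ p q = 0) :
    ∃ x ∈ I p, ∃ y ∈ I q, G.θ x y ≤ 0 := by
  have h₁ := ((hI.2.2.2 p q hpq).2.2 ⟨hpq, h⟩).1
  simp only [StronglyComplete, StrongAdj, not_forall] at h₁
  obtain ⟨x, hx, y, hy, hxy⟩ := h₁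
  exact ⟨x, hx, y, hy, by have := G.θ_le_one x y; omega⟩

theorem exists_θ_nonneg (hI : G.IsThickening G' I) (hpq : p ≠ q) (h : G'.θ p q = 0) :
    ∃ x ∈ I p, ∃ y ∈ I q, 0 ≤ G.θ x y := by
  have h₁ := ((hI.2.2.2 p q hpq).2.2 ⟨hpq, h⟩).2
  simp only [StronglyAnticomplete, StrongAntiAdj, not_forall] at h₁
  obtain ⟨x, hx, y, hy, hxy⟩ := h₁
  exact ⟨x, hx, y, hy, by have := G.neg_one_le_θ x y; omega⟩

theorem isSquare (hI : G.IsThickening G' I) {x₁ x₂ x₃ x₄ : V} {p₁ p₂ p₃ p₄ : V'}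
    (h : G.IsSquare x₁ x₂ x₃ x₄) (h₁ : x₁ ∈ I p₁) (h₂ : x₂ ∈ I p₂) (h₃ : x₃ ∈ I p₃)
    (h₄ : x₄ ∈ I p₄) (h₁₂ : p₁ ≠ p₂) (h₁₃ : p₁ ≠ p₃) (h₁₄ : p₁ ≠ p₄) (h₂₃ : p₂ ≠ p₃)
    (h₂₄ : p₂ ≠ p₄) (h₃₄ : p₃ ≠ p₄) : G'.IsSquare p₁ p₂ p₃ p₄ := by
  have adj : ∀ {p q x y}, p ≠ q → x ∈ I p → y ∈ I q → G.Adj x y → G'.Adj p q :=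
    fun hpq hx hy hxy => adj_of_θ_nonneg hpq (hI.θ_nonneg hpq hx hy hxy.θ_nonneg)
  have antiAdj : ∀ {p q x y}, p ≠ q → x ∈ I p → y ∈ I q → G.AntiAdj x y → G'.AntiAdj p q :=
    fun hpq hx hy hxy => antiAdj_of_θ_nonpos hpq (hI.θ_nonpos hpq hx hy hxy.θ_nonpos)
  obtain ⟨a₁₃, a₂₄, a₁₂, a₂₃, a₃₄, a₄₁⟩ := h
  exact ⟨antiAdj h₁₃ h₁ h₃ a₁₃, antiAdj h₂₄ h₂ h₄ a₂₄, adj h₁₂ h₁ h₂ a₁₂, adj h₂₃ h₂ h₃ a₂₃,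
    adj h₃₄ h₃ h₄ a₃₄, adj h₁₄.symm h₄ h₁ a₄₁⟩

theorem subset_of_verticesMeeting_eq_singleton (hI : G.IsThickening G' I)
    (h : verticesMeeting I X = {p}) : X ⊆ I p := by
  intro z hz
  obtain ⟨q, hq⟩ := hI.exists_mem z
  have : q ∈ verticesMeeting I X := ⟨z, hq, hz⟩
  rw [h, Set.mem_singleton_iff] at this
  exact this ▸ hq


theorem disjoint_verticesMeeting_of_separates (hI : G.IsThickening G' I)
    (hsc : G.SquareConnected A B) (hv : G.Separates v A B) :
    Disjoint (verticesMeeting I A) (verticesMeeting I B) := by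
  rw [Set.disjoint_left]
  rintro p ⟨x, hxp, hxA⟩ ⟨y, hyp, hyB⟩
  obtain ⟨y', hy'B, hxy'⟩ := hsc.exists_θ_nonpos hxA
  obtain ⟨q, hy'q⟩ := hI.exists_mem y'
  obtain ⟨r, hvr⟩ := hI.exists_mem v
  have hvy := hv.2 y hyB
  have hvy' := hv.2 y' hy'B
  have hpq : p ≠ q := by
    rintro rfl
    have := hI.θ_eq_one_of_mem hxp hy'q (hsc.1.disjoint.ne_of_mem hxA hy'B)
    omega
  have hrp : r ≠ p := by
    rintro rfl
    have := hI.θ_nonneg_of_mem hvr hyp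
    omega
  have hrq : r ≠ q := by
    rintro rfl
    have := hI.θ_nonneg_of_mem hvr hy'q
    omega
  have hpq₀ : G'.θ p q = 0 :=
    hI.θ_eq_zero hpq hxp hyp hy'q hy'q hxy' (hsc.1.isStrongClique_right.θ_nonneg hyB hy'B)
  have hpr₀ : G'.θ p r = 0 := hI.θ_eq_zero hrp.symm hyp hxp hvr hvr
    (by rw [G.symm]; omega) (by rw [G.symm, hv.1 x hxA]; norm_num)
  exact hrq (G'.eq_of_θ_eq_zero hpq hrp.symm hpq₀ hpr₀).symm

theorem disjoint_verticesMeeting (hI : G.IsThickening G' I) (hconn : G.Connected)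
    (hnd : G.NonDegenerate) (hsc : G.SquareConnected A B) :
    Disjoint (verticesMeeting I A) (verticesMeeting I B) := by
  obtain ⟨v, hv | hv⟩ := hsc.exists_separates hconn hnd
  · exact hI.disjoint_verticesMeeting_of_separates hsc hv
  · exact (hI.disjoint_verticesMeeting_of_separates hsc.symm hv).symm

theorem separates_of_θ_eq_zero (hI : G.IsThickening G' I) (hsc : G.SquareConnected A B)
    (hdisj : Disjoint (verticesMeeting I A) (verticesMeeting I B))
    (hp : p ∈ verticesMeeting I A) (hq : q ∈ verticesMeeting I A)
    (hpq : p ≠ q) (h₀ : G'.θ p q = 0) (hu : u ∈ I p) (huA : u ∉ A) : G.Separates u A B := by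
  obtain ⟨x, hxp, hxA⟩ := id hp
  have hout : u ∉ A ∪ B := fun h =>
    h.elim huA fun huB => Set.disjoint_left.1 hdisj hp ⟨u, hu, huB⟩
  have hux : G.θ u x = 1 := hI.θ_eq_one_of_mem hu hxp (ne_of_mem_of_not_mem hxA huA).symm
  refine ⟨fun z hz => (hsc.1.θ_eq_left hout hz hxA).trans hux, ?_⟩
  refine (hsc.1.θ_right hout).resolve_left fun hcomp => ?_
  obtain ⟨y, hyB, hxy⟩ := hsc.exists_θ_nonpos hxA
  obtain ⟨r, hyr⟩ := hI.exists_mem y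
  have hr : ∀ {s}, s ∈ verticesMeeting I A → s ≠ r :=
    fun hs => hdisj.ne_of_mem hs ⟨y, hyr, hyB⟩
  have hpr₀ : G'.θ p r = 0 :=
    hI.θ_eq_zero (hr hp) hxp hu hyr hyr hxy (by rw [hcomp y hyB]; norm_num)
  exact hr hq (G'.eq_of_θ_eq_zero hpq (hr hp) h₀ hpr₀)


theorem isStrongClique_verticesMeeting (hI : G.IsThickening G' I) (hcf : G.ClawFree)
    (hsc : G.SquareConnected A B)
    (hdisj : Disjoint (verticesMeeting I A) (verticesMeeting I B)) :
    G'.IsStrongClique (verticesMeeting I A) := by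
  intro p hp q hq hpq
  obtain ⟨x, hxp, hxA⟩ := id hp
  obtain ⟨x', hx'q, hx'A⟩ := id hq
  have h₀ := hI.θ_nonneg hpq hxp hx'q (hsc.1.isStrongClique_left.θ_nonneg hxA hx'A)
  by_contra hne
  have hpq₀ : G'.θ p q = 0 := by
    have := G'.θ_le_one p q
    unfold StrongAdj at hne
    omega
  obtain ⟨f, hf, g, hg, hfg⟩ := hI.exists_θ_nonpos hpq hpq₀
  have hf' := hI.separates_of_θ_eq_zero hsc hdisj hp hq hpq hpq₀ hf
  have hg' := hI.separates_of_θ_eq_zero hsc hdisj hq hp hpq.symm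
    (by rw [G'.symm]; exact hpq₀) hg
  have hfg' : f ≠ g := fun h => hpq (hI.eq_of_mem_of_mem hf (h ▸ hg))
  by_cases hfA : f ∈ A <;> by_cases hgA : g ∈ A
  · have : G.θ f g = 1 := hsc.1.isStrongClique_left hfA hgA hfg'
    omega
  · have := (hg' hgA).1 f hfA
    rw [G.symm] at hfg
    omega
  · have := (hf' hfA).1 g hgA
    omega
  · obtain ⟨y, hyB, hxy⟩ := hsc.exists_θ_nonneg hxA
    exact hcf ⟨x, f, g, y,
      adj_of_θ_eq_one (by rw [G.symm]; exact (hf' hfA).1 x hxA),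
      adj_of_θ_eq_one (by rw [G.symm]; exact (hg' hgA).1 x hxA),
      adj_of_θ_nonneg (hsc.1.disjoint.ne_of_mem hxA hyB) hxy, antiAdj_of_θ_nonpos hfg' hfg,
      antiAdj_of_θ_eq_neg_one ((hf' hfA).2 y hyB), antiAdj_of_θ_eq_neg_one ((hg' hgA).2 y hyB)⟩

/-- Semiadjacency to `w` forces the edges from `p` to the vertices meeting `B` to be strong,
and a vertex of `I p \ A` would then see `B` both strongly adjacently and strongly
antiadjacently. -/
theorem subset_of_θ_eq_zero (hI : G.IsThickening G' I) (hsc : G.SquareConnected A B)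
    (hdisj : Disjoint (verticesMeeting I A) (verticesMeeting I B))
    (hp : p ∈ verticesMeeting I A) (hw : w' ∉ verticesMeeting I B) (hpw : p ≠ w')
    (h₀ : G'.θ p w' = 0) : I p ⊆ A := by
  obtain ⟨x, hxp, hxA⟩ := id hp
  intro u hu
  by_contra huA
  have huB : u ∉ B := fun huB => Set.disjoint_left.1 hdisj hp ⟨u, hu, huB⟩
  have strong : ∀ {y r}, y ∈ B → y ∈ I r → p ≠ r ∧ G'.θ p r ≠ 0 := fun hyB hyr =>
    ⟨hdisj.ne_of_mem hp ⟨_, hyr, hyB⟩, fun h => hw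
      ((G'.eq_of_θ_eq_zero hpw (hdisj.ne_of_mem hp ⟨_, hyr, hyB⟩) h₀ h) ▸ ⟨_, hyr, hyB⟩)⟩
  obtain ⟨y, hyB, hxy⟩ := hsc.exists_θ_nonpos hxA
  obtain ⟨y', hy'B, hxy'⟩ := hsc.exists_θ_nonneg hxA
  obtain ⟨r, hyr⟩ := hI.exists_mem y
  obtain ⟨r', hy'r'⟩ := hI.exists_mem y'
  obtain ⟨hpr, hpr₀⟩ := strong hyB hyr
  obtain ⟨hpr', hpr'₀⟩ := strong hy'B hy'r'
  have h₁ := hI.θ_nonpos hpr hxp hyr hxy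
  have h₂ := hI.θ_nonneg hpr' hxp hy'r' hxy'
  have h₃ := G'.neg_one_le_θ p r
  have h₄ := G'.θ_le_one p r'
  have := hsc.1.θ_eq_right (not_or.2 ⟨huA, huB⟩) hyB hy'B
  rw [hI.θ_eq_neg_one hpr hu hyr (by omega), hI.θ_eq_one hpr' hu hy'r' (by omega)] at this
  norm_num at this

/-- A bag outside `A ∪ B` semiadjacent to `p` would contain vertices strongly anticomplete and
strongly complete to `A`, making it semiadjacent to every vertex meeting `A`; so `A ⊆ I p`,
and the vertex whose bag contains some `y ∈ B` would be a second semiadjacent partner of `p`. -/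
theorem θ_ne_zero_of_not_mem (hI : G.IsThickening G' I) (hsc : G.SquareConnected A B)
    (hdisj : Disjoint (verticesMeeting I A) (verticesMeeting I B))
    (hwA : w' ∉ verticesMeeting I A) (hwB : w' ∉ verticesMeeting I B)
    (hp : p ∈ verticesMeeting I A) : G'.θ w' p ≠ 0 := by
  intro h₀
  have hwp : w' ≠ p := fun h => hwA (h ▸ hp)
  have hpA : I p ⊆ A :=
    hI.subset_of_θ_eq_zero hsc hdisj hp hwB hwp.symm (by rw [G'.symm]; exact h₀)
  have hout : ∀ e ∈ I w', e ∉ A ∪ B := fun e he h =>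
    h.elim (fun h => hwA ⟨e, he, h⟩) (fun h => hwB ⟨e, he, h⟩)
  obtain ⟨e, he, g, hg, heg⟩ := hI.exists_θ_nonpos hwp h₀
  obtain ⟨e', he', g', hg', heg'⟩ := hI.exists_θ_nonneg hwp h₀
  have hAp : A ⊆ I p := by
    intro z hz
    obtain ⟨s, hzs⟩ := hI.exists_mem z
    have hws : w' ≠ s := fun h => hwA (h ▸ ⟨z, hzs, hz⟩)
    have hws₀ : G'.θ w' s = 0 := hI.θ_eq_zero hws he he' hzs hzs
      (by rwa [hsc.1.θ_eq_left (hout e he) hz (hpA hg)])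
      (by rwa [hsc.1.θ_eq_left (hout e' he') hz (hpA hg')])
    exact G'.eq_of_θ_eq_zero hwp hws h₀ hws₀ ▸ hzs
  obtain ⟨y, hyB⟩ := hsc.1.nonempty_right
  obtain ⟨x, hxA, hyx⟩ := hsc.symm.exists_θ_nonpos hyB
  obtain ⟨x', hx'A, hyx'⟩ := hsc.symm.exists_θ_nonneg hyB
  obtain ⟨r, hyr⟩ := hI.exists_mem y
  have hpr : p ≠ r := hdisj.ne_of_mem hp ⟨y, hyr, hyB⟩
  have hrw : r ≠ w' := fun h => hwB (h ▸ ⟨y, hyr, hyB⟩)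
  have hpr₀ : G'.θ p r = 0 := by
    rw [G'.symm]; exact hI.θ_eq_zero hpr.symm hyr hyr (hAp hxA) (hAp hx'A) hyx hyx'
  exact hrw (G'.eq_of_θ_eq_zero hwp.symm hpr (by rw [G'.symm]; exact h₀) hpr₀).symm

theorem stronglyComplete_or_stronglyAnticomplete_verticesMeeting (hI : G.IsThickening G' I)
    (hsc : G.SquareConnected A B)
    (hdisj : Disjoint (verticesMeeting I A) (verticesMeeting I B))
    (hw : w' ∉ verticesMeeting I A ∪ verticesMeeting I B) :
    G'.StronglyComplete {w'} (verticesMeeting I A) ∨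
      G'.StronglyAnticomplete {w'} (verticesMeeting I A) := by
  obtain ⟨hwA, hwB⟩ := not_or.1 hw
  obtain ⟨e, he⟩ := (hI.1 w').1
  have heAB : e ∉ A ∪ B := fun h => h.elim (fun h => hwA ⟨e, he, h⟩) (fun h => hwB ⟨e, he, h⟩)
  have key : ∀ {p}, p ∈ verticesMeeting I A → ∃ x ∈ A, G'.θ w' p ≠ 0 ∧
      (G'.θ w' p = 1 → G.θ e x = 1) ∧ (G'.θ w' p = -1 → G.θ e x = -1) := by
    intro p hp
    obtain ⟨x, hxp, hxA⟩ := id hp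
    have hwp : w' ≠ p := fun h => hwA (h ▸ hp)
    exact ⟨x, hxA, hI.θ_ne_zero_of_not_mem hsc hdisj hwA hwB hp,
      hI.θ_eq_one hwp he hxp, hI.θ_eq_neg_one hwp he hxp⟩
  rcases hsc.1.θ_left heAB with hc | ha
  · refine Or.inl fun u hu p hp => ?_
    obtain ⟨x, hxA, h₀, -, h₁⟩ := key hp
    have := G'.range_mem w' p
    have := hc x hxA
    rw [Set.mem_singleton_iff.1 hu]
    show G'.θ w' p = 1
    grind
  · refine Or.inr fun u hu p hp => ?_
    obtain ⟨x, hxA, h₀, h₁, -⟩ := key hp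
    have := G'.range_mem w' p
    have := ha x hxA
    rw [Set.mem_singleton_iff.1 hu]
    show G'.θ w' p = -1
    grind

theorem exists_isSquare_of_partition_verticesMeeting (hI : G.IsThickening G' I)
    (hsc : G.SquareConnected A B) {P₁ P₂ : Set V'} (h₁ : P₁.Nonempty) (h₂ : P₂.Nonempty)
    (hun : P₁ ∪ P₂ = verticesMeeting I A) (hd : Disjoint P₁ P₂) :
    ∃ p₁ ∈ P₁, ∃ p₂ ∈ P₂, ∃ a₁ ∈ I p₁, ∃ a₂ ∈ I p₂, ∃ b₁ ∈ B, ∃ b₂ ∈ B,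
      G.IsSquare a₁ a₂ b₁ b₂ := by
  have pullback : ∀ {P}, P ⊆ verticesMeeting I A → P.Nonempty →
      {z ∈ A | ∃ p ∈ P, z ∈ I p}.Nonempty := by
    rintro P hP ⟨p, hp⟩
    obtain ⟨x, hxp, hxA⟩ := hP hp
    exact ⟨x, hxA, p, hp, hxp⟩
  have hcover : {z ∈ A | ∃ p ∈ P₁, z ∈ I p} ∪ {z ∈ A | ∃ p ∈ P₂, z ∈ I p} = A := by
    refine Set.Subset.antisymm (Set.union_subset (fun z hz => hz.1) (fun z hz => hz.1))
      fun z hz => ?_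
    obtain ⟨p, hzp⟩ := hI.exists_mem z
    have hp : p ∈ P₁ ∪ P₂ := hun ▸ ⟨z, hzp, hz⟩
    exact hp.elim (fun hp => Or.inl ⟨hz, p, hp, hzp⟩) (fun hp => Or.inr ⟨hz, p, hp, hzp⟩)
  have hdisj : Disjoint {z ∈ A | ∃ p ∈ P₁, z ∈ I p} {z ∈ A | ∃ p ∈ P₂, z ∈ I p} :=
    Set.disjoint_left.2 fun z ⟨_, p, hp, hzp⟩ ⟨_, q, hq, hzq⟩ =>
      hd.ne_of_mem hp hq (hI.eq_of_mem_of_mem hzp hzq)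
  obtain ⟨a₁, ⟨-, p₁, hp₁, ha₁⟩, a₂, ⟨-, p₂, hp₂, ha₂⟩, b₁, hb₁, b₂, hb₂, hsq⟩ :=
    hsc.exists_isSquare_of_partition (pullback (hun ▸ Set.subset_union_left) h₁)
      (pullback (hun ▸ Set.subset_union_right) h₂) hcover hdisj
  exact ⟨p₁, hp₁, p₂, hp₂, a₁, ha₁, a₂, ha₂, b₁, hb₁, b₂, hb₂, hsq⟩

theorem squareMeets_verticesMeeting (hI : G.IsThickening G' I) (hsc : G.SquareConnected A B)
    (hdisj : Disjoint (verticesMeeting I A) (verticesMeeting I B)) {P₁ P₂ : Set V'}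
    (h₁ : P₁.Nonempty) (h₂ : P₂.Nonempty) (hun : P₁ ∪ P₂ = verticesMeeting I A)
    (hd : Disjoint P₁ P₂) :
    G'.SquareMeets (verticesMeeting I A ∪ verticesMeeting I B) P₁ P₂ := by
  obtain ⟨p₁, hp₁, p₂, hp₂, a₁, ha₁, a₂, ha₂, b₁, hb₁, b₂, hb₂, hsq⟩ :=
    hI.exists_isSquare_of_partition_verticesMeeting hsc h₁ h₂ hun hd
  obtain ⟨q₁, hq₁⟩ := hI.exists_mem b₁
  obtain ⟨q₂, hq₂⟩ := hI.exists_mem b₂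
  have hpA₁ : p₁ ∈ verticesMeeting I A := hun ▸ Or.inl hp₁
  have hpA₂ : p₂ ∈ verticesMeeting I A := hun ▸ Or.inr hp₂
  have hqB₁ : q₁ ∈ verticesMeeting I B := ⟨b₁, hq₁, hb₁⟩
  have hqB₂ : q₂ ∈ verticesMeeting I B := ⟨b₂, hq₂, hb₂⟩
  have hp₁₂ : p₁ ≠ p₂ := hd.ne_of_mem hp₁ hp₂
  have hq₁₂ : q₁ ≠ q₂ := by
    rintro rfl
    obtain ⟨h₁₁, h₂₂, -, h₂₁, -, h₁₂⟩ := hsq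
    have h₁ : G'.θ q₁ p₁ = 0 := hI.θ_eq_zero (hdisj.ne_of_mem hpA₁ hqB₁).symm hq₁ hq₂ ha₁ ha₁
      h₁₁.symm.θ_nonpos h₁₂.θ_nonneg
    have h₂ : G'.θ q₁ p₂ = 0 := hI.θ_eq_zero (hdisj.ne_of_mem hpA₂ hqB₁).symm hq₂ hq₁ ha₂ ha₂
      h₂₂.symm.θ_nonpos h₂₁.symm.θ_nonneg
    exact hp₁₂ (G'.eq_of_θ_eq_zero (hdisj.ne_of_mem hpA₁ hqB₁).symm
      (hdisj.ne_of_mem hpA₂ hqB₁).symm h₁ h₂)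
  refine ⟨p₁, p₂, q₁, q₂, hI.isSquare hsq ha₁ ha₂ hq₁ hq₂ hp₁₂ (hdisj.ne_of_mem hpA₁ hqB₁)
    (hdisj.ne_of_mem hpA₁ hqB₂) (hdisj.ne_of_mem hpA₂ hqB₁) (hdisj.ne_of_mem hpA₂ hqB₂) hq₁₂,
    ?_, ⟨p₁, by simp, hp₁⟩, ⟨p₂, by simp, hp₂⟩⟩
  simp only [Set.insert_subset_iff, Set.singleton_subset_iff, Set.mem_union]
  exact ⟨Or.inl hpA₁, Or.inl hpA₂, Or.inr hqB₁, Or.inr hqB₂⟩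

theorem squareConnected_verticesMeeting (hI : G.IsThickening G' I) (hcf : G.ClawFree)
    (hsc : G.SquareConnected A B)
    (hdisj : Disjoint (verticesMeeting I A) (verticesMeeting I B))
    (hns : ¬ ∃ p q, verticesMeeting I A = {p} ∧ verticesMeeting I B = {q}) :
    G'.SquareConnected (verticesMeeting I A) (verticesMeeting I B) := by
  obtain ⟨x, hx⟩ := hsc.1.nonempty_left
  obtain ⟨y, hy⟩ := hsc.1.nonempty_right
  obtain ⟨p, hxp⟩ := hI.exists_mem x
  obtain ⟨q, hyq⟩ := hI.exists_mem y
  refine ⟨⟨⟨p, x, hxp, hx⟩, ⟨q, y, hyq, hy⟩, hdisj,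
    hI.isStrongClique_verticesMeeting hcf hsc hdisj,
    hI.isStrongClique_verticesMeeting hcf hsc.symm hdisj.symm, hns, fun w hw =>
    ⟨hI.stronglyComplete_or_stronglyAnticomplete_verticesMeeting hsc hdisj hw,
      hI.stronglyComplete_or_stronglyAnticomplete_verticesMeeting hsc.symm hdisj.symm
        (by rwa [Set.union_comm])⟩⟩,
    fun P₁ P₂ => hI.squareMeets_verticesMeeting hsc hdisj, fun Q₁ Q₂ h₁ h₂ hun hd => ?_⟩
  rw [Set.union_comm]
  exact hI.squareMeets_verticesMeeting hsc.symm hdisj.symm h₁ h₂ hun hd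

theorem semiAdj_of_verticesMeeting_eq_singleton (hI : G.IsThickening G' I)
    (hsc : G.SquareConnected A B)
    (hdisj : Disjoint (verticesMeeting I A) (verticesMeeting I B))
    (hA : verticesMeeting I A = {p}) (hB : verticesMeeting I B = {q}) : G'.SemiAdj p q := by
  have hAp := hI.subset_of_verticesMeeting_eq_singleton hA
  have hBq := hI.subset_of_verticesMeeting_eq_singleton hB
  have hpq : p ≠ q := hdisj.ne_of_mem (by simp [hA]) (by simp [hB])
  obtain ⟨x, hx⟩ := hsc.1.nonempty_left
  obtain ⟨y, hyB, hxy⟩ := hsc.exists_θ_nonpos hx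
  obtain ⟨y', hy'B, hxy'⟩ := hsc.exists_θ_nonneg hx
  exact ⟨hpq, hI.θ_eq_zero hpq (hAp hx) (hAp hx) (hBq hyB) (hBq hy'B) hxy hxy'⟩

end IsThickening

end Trigraph

theorem squareConnected_contained_in_semiedge_general {V V' : Type}
    (G : Trigraph V) (hconn : G.Connected) (hnd : G.NonDegenerate)
    (A B : Set V) (hAB : G.SquareConnected A B)
    (G' : Trigraph V') (I : V' → Set V) (hopt : G.OptimalAntithickening G' I) :
    ∃ a b : V', G'.SemiAdj a b ∧ A ⊆ I a ∧ B ⊆ I b := by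
  obtain ⟨hI, hlam, -⟩ := hopt
  have hdisj := hI.disjoint_verticesMeeting hconn hnd hAB
  by_cases hsingle :
      ∃ p q, Trigraph.verticesMeeting I A = {p} ∧ Trigraph.verticesMeeting I B = {q}
  · obtain ⟨p, q, hp, hq⟩ := hsingle
    exact ⟨p, q, hI.semiAdj_of_verticesMeeting_eq_singleton hAB hdisj hp hq,
      hI.subset_of_verticesMeeting_eq_singleton hp, hI.subset_of_verticesMeeting_eq_singleton hq⟩
  · exact (hlam ⟨_, _, hI.squareConnected_verticesMeeting hnd.clawFree hAB hdisj hsingle⟩).elim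

/-- In an optimal antithickening of a connected non-degenerate trigraph,
every square-connected homogeneous pair of strong cliques is contained in the preimages
of a semiadjacent pair of vertices. -/
theorem squareConnected_contained_in_semiedge {V V' : Type} [Fintype V] [Fintype V']
    (G : Trigraph V) (hconn : G.Connected) (hnd : G.NonDegenerate)
    (A B : Set V) (hAB : G.SquareConnected A B)
    (G' : Trigraph V') (I : V' → Set V) (hopt : G.OptimalAntithickening G' I) :
    ∃ a b : V', G'.SemiAdj a b ∧ A ⊆ I a ∧ B ⊆ I b :=
  squareConnected_contained_in_semiedge_general G hconn hnd A B hAB G' I hopt
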